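/- arXiv:1506.08942 — 2 statements merged into one kernel-verified Lean document; each statement's English description precedes it below -/
import Mathlib

section
/- Let H₁, H₂ be separable Hilbert spaces, K : H₁ → H₂ a bounded linear operator with adjoint K*, and set G = K*K, F = KK*. For fixed constants 0 < A ≤ B < ∞, the following are equivalent: (i) A⟨Gc, c⟩ ≤ ⟨G²c, c⟩ ≤ B⟨Gc, c⟩ for all c ∈ H₁; (ii) A‖φ‖² ≤ ⟨Fφ, φ⟩ ≤ B‖φ‖² for all φ in the closure of the range of K. -/
/-!
Both conditions are the same family of inequalities, read at `φ = K c`: since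
`⟨Gc, c⟩ = ‖Kc‖²` and `⟨G²c, c⟩ = ⟨F(Kc), Kc⟩`, condition (i) says exactly that (ii) holds on
the range of `K`, and the set where (ii) holds is closed.
-/

open ContinuousLinearMap RCLike

theorem forall_mem_closure_range_iff {X Y : Type*} [TopologicalSpace Y] {f : X → Y}
    {p : Y → Prop} (hp : IsClosed {y | p y}) :
    (∀ y ∈ closure (Set.range f), p y) ↔ ∀ x, p (f x) :=
  (hp.closure_subset_iff.trans Set.range_subset_iff :)

section Adjoint

variable {𝕜 E F : Type*} [RCLike 𝕜]
  [NormedAddCommGroup E] [InnerProductSpace 𝕜 E] [CompleteSpace E]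
  [NormedAddCommGroup F] [InnerProductSpace 𝕜 F] [CompleteSpace F]

theorem inner_adjoint_comp_self_sq_apply (K : E →L[𝕜] F) (c : E) :
    inner 𝕜 ((adjoint K ∘L K) ((adjoint K ∘L K) c)) c =
      inner 𝕜 ((K ∘L adjoint K) (K c)) (K c) :=
  adjoint_inner_left K c _

end Adjoint

theorem isClosed_setOf_re_inner_bounds {𝕜 E : Type*} [RCLike 𝕜] [NormedAddCommGroup E]
    [InnerProductSpace 𝕜 E] (T : E →L[𝕜] E) (A B : ℝ) :
    IsClosed {φ : E | A * ‖φ‖ ^ 2 ≤ re (inner 𝕜 (T φ) φ) ∧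
      re (inner 𝕜 (T φ) φ) ≤ B * ‖φ‖ ^ 2} := by
  have hform : Continuous fun φ : E => re (inner 𝕜 (T φ) φ) := by fun_prop
  have hnorm : Continuous fun φ : E => ‖φ‖ ^ 2 := by fun_prop
  exact (isClosed_le (hnorm.const_smul A) hform).inter (isClosed_le hform (hnorm.const_smul B))

open ContinuousLinearMap in
theorem stmt0_general {H₁ H₂ : Type*} [NormedAddCommGroup H₁] [InnerProductSpace ℂ H₁] [CompleteSpace H₁]
    [NormedAddCommGroup H₂] [InnerProductSpace ℂ H₂] [CompleteSpace H₂]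
    (K : H₁ →L[ℂ] H₂) (A B : ℝ)
    (G : H₁ →L[ℂ] H₁) (hG : G = adjoint K ∘L K)
    (F : H₂ →L[ℂ] H₂) (hF : F = K ∘L adjoint K) :
    (∀ c : H₁,
      A * (inner ℂ (G c) c : ℂ).re ≤ (inner ℂ (G (G c)) c : ℂ).re ∧
      (inner ℂ (G (G c)) c : ℂ).re ≤ B * (inner ℂ (G c) c : ℂ).re) ↔
    (∀ φ ∈ closure (Set.range K),
      A * ‖φ‖ ^ 2 ≤ (inner ℂ (F φ) φ : ℂ).re ∧
      (inner ℂ (F φ) φ : ℂ).re ≤ B * ‖φ‖ ^ 2) := by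
  subst hG hF
  simp only [← RCLike.re_to_complex]
  rw [forall_mem_closure_range_iff (isClosed_setOf_re_inner_bounds (K ∘L adjoint K) A B)]
  simp only [← apply_norm_sq_eq_inner_adjoint_left, inner_adjoint_comp_self_sq_apply]

open ContinuousLinearMap in
/-- Lemma 2.4 (i ⇔ ii): for a bounded operator `K : H₁ → H₂` with `G = K*K`, `F = KK*`,
and `0 < A ≤ B`, the quadratic-form inequalities `A⟨Gc,c⟩ ≤ ⟨G²c,c⟩ ≤ B⟨Gc,c⟩` on `H₁` are
equivalent to `A‖φ‖² ≤ ⟨Fφ,φ⟩ ≤ B‖φ‖²` on the closure of the range of `K`. -/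
theorem stmt0 {H₁ H₂ : Type*} [NormedAddCommGroup H₁] [InnerProductSpace ℂ H₁] [CompleteSpace H₁]
    [NormedAddCommGroup H₂] [InnerProductSpace ℂ H₂] [CompleteSpace H₂]
    (K : H₁ →L[ℂ] H₂) (A B : ℝ) (hA : 0 < A) (hAB : A ≤ B)
    (G : H₁ →L[ℂ] H₁) (hG : G = adjoint K ∘L K)
    (F : H₂ →L[ℂ] H₂) (hF : F = K ∘L adjoint K) :
    (∀ c : H₁,
      A * (inner ℂ (G c) c : ℂ).re ≤ (inner ℂ (G (G c)) c : ℂ).re ∧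
      (inner ℂ (G (G c)) c : ℂ).re ≤ B * (inner ℂ (G c) c : ℂ).re) ↔
    (∀ φ ∈ closure (Set.range K),
      A * ‖φ‖ ^ 2 ≤ (inner ℂ (F φ) φ : ℂ).re ∧
      (inner ℂ (F φ) φ : ℂ).re ≤ B * ‖φ‖ ^ 2) :=
  stmt0_general K A B G hG F hF
end

section
/- Let K : H₁ → H₂ be a bounded operator between Hilbert spaces and G = K*K. Then the inequalities A⟨Gc, c⟩ ≤ ⟨G²c, c⟩ ≤ B⟨Gc, c⟩ for all c ∈ H₁ (with 0 < A ≤ B < ∞) hold if and only if the operator inequalities A·P ≤ G ≤ B·P hold, where P is the orthogonal projection onto the closure of the range of K*. -/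
/-!
Write `G = K*K` and `P` for the projection onto `cl(Ran K*) = (ker K)ᗮ`. Since `⟪G(Gc), c⟫ = ‖Gc‖²`,
`⟪Gc, c⟫ = ‖Kc‖²` and `⟪Pc, c⟫ = ‖Pc‖²`, the conditions read `A‖Kc‖² ≤ ‖Gc‖² ≤ B‖Kc‖²` and
`A‖Pc‖² ≤ ‖Kc‖² ≤ B‖Pc‖²`, and the lower and the upper bounds are equivalent separately.
As `KP = K`, Cauchy–Schwarz gives `‖Kc‖² = Re⟪Gc, Pc⟫ ≤ ‖Gc‖‖Pc‖`; squared, it turns the upper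
bound for `G` into the one for `K`, and the lower bound for `K` into the one for `G`, after
cancelling a square. Conversely, `‖Kx‖² ≤ B‖x‖²` holds on all of `H₁` because `‖Pc‖ ≤ ‖c‖`, hence
`‖K*y‖² ≤ B‖y‖²`, in particular for `y = Kc`. Finally, the lower bound for `G` gives
`A|⟪Gy, c⟫|² = A|⟪Ky, Kc⟫|² ≤ ‖Gy‖²‖Kc‖²`, a closed condition on `Gy` that therefore holds on
`cl(Ran G) = cl(Ran K*)`, in particular at `Pc`, where `⟪Pc, c⟫ = ‖Pc‖²`.
-/

section

open ContinuousLinearMap RCLike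
open scoped InnerProductSpace InnerProduct

theorem le_of_mul_self_le_mul {α : Type*} [Field α] [LinearOrder α] [IsStrictOrderedRing α]
    {a b : α} (hb : 0 ≤ b) (h : a * a ≤ a * b) : a ≤ b := by
  nlinarith

variable {𝕜 E F : Type*} [RCLike 𝕜] [NormedAddCommGroup E] [InnerProductSpace 𝕜 E]
  [NormedAddCommGroup F] [InnerProductSpace 𝕜 F]

theorem Submodule.re_inner_starProjection_self (K : Submodule 𝕜 E) [K.HasOrthogonalProjection]
    (v : E) : re ⟪K.starProjection v, v⟫_𝕜 = ‖K.starProjection v‖ ^ 2 := by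
  rw [re_inner_starProjection_eq_normSq, starProjection_apply, coe_norm]

namespace ContinuousLinearMap

variable [CompleteSpace E] [CompleteSpace F]

theorem _root_.IsSelfAdjoint.re_inner_apply_apply_eq_sq_norm {S : E →L[𝕜] E} (hS : IsSelfAdjoint S)
    (c : E) : re ⟪S (S c), c⟫_𝕜 = ‖S c‖ ^ 2 := by
  rw [← adjoint_inner_right, hS.adjoint_eq, inner_self_eq_norm_sq]

theorem orthogonal_topologicalClosure_range_adjoint (T : E →L[𝕜] F) :
    (T†.range.topologicalClosure)ᗮ = T.ker := by
  rw [Submodule.orthogonal_closure, orthogonal_range, adjoint_adjoint]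

theorem topologicalClosure_range_adjoint_comp_self (T : E →L[𝕜] F) :
    (T† ∘L T).range.topologicalClosure = T†.range.topologicalClosure := by
  rw [← Submodule.orthogonal_orthogonal_eq_closure, ← Submodule.orthogonal_orthogonal_eq_closure,
    orthogonal_range, orthogonal_range, adjoint_comp, adjoint_adjoint, ker_adjoint_comp_self]

theorem apply_starProjection_topologicalClosure_range_adjoint (T : E →L[𝕜] F) (c : E) :
    T (T†.range.topologicalClosure.starProjection c) = T c := by
  have h := Submodule.sub_starProjection_mem_orthogonal (K := T†.range.topologicalClosure) c
  rw [orthogonal_topologicalClosure_range_adjoint, LinearMap.mem_ker, coe_coe, map_sub,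
    sub_eq_zero] at h
  exact h.symm

theorem sq_norm_apply_le_norm_adjoint_comp_self_mul_norm_starProjection (T : E →L[𝕜] F) (c : E) :
    ‖T c‖ ^ 2 ≤ ‖(T† ∘L T) c‖ * ‖T†.range.topologicalClosure.starProjection c‖ := by
  calc ‖T c‖ ^ 2 = re ⟪T c, T (T†.range.topologicalClosure.starProjection c)⟫_𝕜 := by
        rw [apply_starProjection_topologicalClosure_range_adjoint, ← inner_self_eq_norm_sq (𝕜 := 𝕜)]
    _ = re ⟪(T† ∘L T) c, T†.range.topologicalClosure.starProjection c⟫_𝕜 := by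
        rw [comp_apply, adjoint_inner_left]
    _ ≤ _ := re_inner_le_norm _ _

theorem sq_norm_adjoint_apply_le {T : E →L[𝕜] F} {B : ℝ} (hB : 0 ≤ B)
    (h : ∀ x, ‖T x‖ ^ 2 ≤ B * ‖x‖ ^ 2) (y : F) : ‖(T†) y‖ ^ 2 ≤ B * ‖y‖ ^ 2 := by
  have hCS : ‖(T†) y‖ ^ 2 ≤ ‖T ((T†) y)‖ * ‖y‖ := by
    rw [← inner_self_eq_norm_sq (𝕜 := 𝕜) ((T†) y), adjoint_inner_right]
    exact re_inner_le_norm _ _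
  refine le_of_mul_self_le_mul (by positivity) ?_
  calc ‖(T†) y‖ ^ 2 * ‖(T†) y‖ ^ 2 ≤ ‖T ((T†) y)‖ ^ 2 * ‖y‖ ^ 2 := by
        rw [← sq, ← mul_pow]; gcongr
    _ ≤ B * ‖(T†) y‖ ^ 2 * ‖y‖ ^ 2 := by gcongr; exact h _
    _ = ‖(T†) y‖ ^ 2 * (B * ‖y‖ ^ 2) := by ring

theorem mul_sq_norm_inner_le_of_mem_topologicalClosure_range_adjoint {T : E →L[𝕜] F} {A : ℝ}
    (hA : 0 ≤ A) (h : ∀ y, A * ‖T y‖ ^ 2 ≤ ‖(T† ∘L T) y‖ ^ 2) (c : E) {x : E}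
    (hx : x ∈ T†.range.topologicalClosure) : A * ‖⟪x, c⟫_𝕜‖ ^ 2 ≤ ‖x‖ ^ 2 * ‖T c‖ ^ 2 := by
  rw [← topologicalClosure_range_adjoint_comp_self, ← SetLike.mem_coe,
    Submodule.topologicalClosure_coe] at hx
  have hclosed : IsClosed {x : E | A * ‖⟪x, c⟫_𝕜‖ ^ 2 ≤ ‖x‖ ^ 2 * ‖T c‖ ^ 2} :=
    isClosed_le (by fun_prop) (by fun_prop)
  refine hclosed.closure_subset_iff.mpr ?_ hx
  rintro _ ⟨y, rfl⟩
  calc A * ‖⟪(T† ∘L T) y, c⟫_𝕜‖ ^ 2 = A * ‖⟪T y, T c⟫_𝕜‖ ^ 2 := by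
        rw [comp_apply, adjoint_inner_left]
    _ ≤ A * (‖T y‖ * ‖T c‖) ^ 2 := by gcongr; exact norm_inner_le_norm _ _
    _ = A * ‖T y‖ ^ 2 * ‖T c‖ ^ 2 := by ring
    _ ≤ ‖(T† ∘L T) y‖ ^ 2 * ‖T c‖ ^ 2 := by gcongr; exact h y

theorem forall_mul_sq_norm_le_sq_norm_adjoint_comp_self_iff (T : E →L[𝕜] F) {A : ℝ} (hA : 0 ≤ A) :
    (∀ c, A * ‖T c‖ ^ 2 ≤ ‖(T† ∘L T) c‖ ^ 2) ↔
      ∀ c, A * ‖T†.range.topologicalClosure.starProjection c‖ ^ 2 ≤ ‖T c‖ ^ 2 := by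
  set P := T†.range.topologicalClosure.starProjection
  constructor
  · intro h c
    have hPc := mul_sq_norm_inner_le_of_mem_topologicalClosure_range_adjoint hA h c
      (T†.range.topologicalClosure.starProjection_apply_mem c)
    have hre : ‖P c‖ ^ 2 ≤ ‖⟪P c, c⟫_𝕜‖ := by
      rw [← Submodule.re_inner_starProjection_self]
      exact re_le_norm _
    refine le_of_mul_self_le_mul (by positivity) ?_
    calc A * ‖P c‖ ^ 2 * (A * ‖P c‖ ^ 2) = A * (A * (‖P c‖ ^ 2) ^ 2) := by ring
      _ ≤ A * (A * ‖⟪P c, c⟫_𝕜‖ ^ 2) := by gcongr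
      _ ≤ A * (‖P c‖ ^ 2 * ‖T c‖ ^ 2) := by gcongr
      _ = A * ‖P c‖ ^ 2 * ‖T c‖ ^ 2 := by ring
  · intro h c
    refine le_of_mul_self_le_mul (by positivity) ?_
    calc A * ‖T c‖ ^ 2 * (A * ‖T c‖ ^ 2) = A * (A * (‖T c‖ ^ 2) ^ 2) := by ring
      _ ≤ A * (A * (‖(T† ∘L T) c‖ * ‖P c‖) ^ 2) := by
        gcongr; exact sq_norm_apply_le_norm_adjoint_comp_self_mul_norm_starProjection T c
      _ = A * (‖(T† ∘L T) c‖ ^ 2 * (A * ‖P c‖ ^ 2)) := by ring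
      _ ≤ A * (‖(T† ∘L T) c‖ ^ 2 * ‖T c‖ ^ 2) := by gcongr; exact h c
      _ = A * ‖T c‖ ^ 2 * ‖(T† ∘L T) c‖ ^ 2 := by ring

theorem forall_sq_norm_adjoint_comp_self_le_mul_sq_norm_iff (T : E →L[𝕜] F) {B : ℝ} (hB : 0 ≤ B) :
    (∀ c, ‖(T† ∘L T) c‖ ^ 2 ≤ B * ‖T c‖ ^ 2) ↔
      ∀ c, ‖T c‖ ^ 2 ≤ B * ‖T†.range.topologicalClosure.starProjection c‖ ^ 2 := by
  set P := T†.range.topologicalClosure.starProjection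
  constructor
  · intro h c
    refine le_of_mul_self_le_mul (by positivity) ?_
    calc ‖T c‖ ^ 2 * ‖T c‖ ^ 2 ≤ (‖(T† ∘L T) c‖ * ‖P c‖) ^ 2 := by
          rw [← sq]; gcongr
          exact sq_norm_apply_le_norm_adjoint_comp_self_mul_norm_starProjection T c
      _ ≤ B * ‖T c‖ ^ 2 * ‖P c‖ ^ 2 := by rw [mul_pow]; gcongr; exact h c
      _ = ‖T c‖ ^ 2 * (B * ‖P c‖ ^ 2) := by ring
  · intro h c
    have hT : ∀ x, ‖T x‖ ^ 2 ≤ B * ‖x‖ ^ 2 := fun x ↦ (h x).trans <| by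
      gcongr; exact T†.range.topologicalClosure.norm_starProjection_apply_le x
    exact sq_norm_adjoint_apply_le hB hT (T c)

end ContinuousLinearMap

end

open ContinuousLinearMap in
/-- For `K : H₁ → H₂` bounded with `G = K*K` and `0 < A ≤ B`, the inequalities
`A⟨Gc,c⟩ ≤ ⟨G²c,c⟩ ≤ B⟨Gc,c⟩` for all `c` hold iff the operator inequalities
`A·P ≤ G ≤ B·P` hold, `P` being the orthogonal projection onto `cl(Ran K*)`,
where `S ≤ T` means `⟨Sc,c⟩ ≤ ⟨Tc,c⟩` for all `c` (and `⟨Pc,c⟩ = ‖Pc‖²`). -/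
theorem stmt1 {H₁ H₂ : Type*} [NormedAddCommGroup H₁] [InnerProductSpace ℂ H₁] [CompleteSpace H₁]
    [NormedAddCommGroup H₂] [InnerProductSpace ℂ H₂] [CompleteSpace H₂]
    (K : H₁ →L[ℂ] H₂) (A B : ℝ) (hA : 0 < A) (hAB : A ≤ B)
    (G : H₁ →L[ℂ] H₁) (hG : G = adjoint K ∘L K)
    (P : H₁ → H₁)
    (hP : ∀ c : H₁, P c =
      (Submodule.orthogonalProjectionOnto (𝕜 := ℂ) (E := H₁) (LinearMap.range (adjoint K : H₂ →ₗ[ℂ] H₁)).topologicalClosure c : H₁)) :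
    (∀ c : H₁,
      A * (inner ℂ (G c) c : ℂ).re ≤ (inner ℂ (G (G c)) c : ℂ).re ∧
      (inner ℂ (G (G c)) c : ℂ).re ≤ B * (inner ℂ (G c) c : ℂ).re) ↔
    (∀ c : H₁,
      A * (inner ℂ (P c) c : ℂ).re ≤ (inner ℂ (G c) c : ℂ).re ∧
      (inner ℂ (G c) c : ℂ).re ≤ B * (inner ℂ (P c) c : ℂ).re) := by
  subst hG
  obtain rfl : P = (adjoint K).range.topologicalClosure.starProjection :=
    funext fun c ↦ by rw [hP, Submodule.starProjection_apply]
  have hGG c := (isPositive_adjoint_comp_self K).isSelfAdjoint.re_inner_apply_apply_eq_sq_norm c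
  have hGc c := (apply_norm_sq_eq_inner_adjoint_left K c).symm
  have hPc c := (adjoint K).range.topologicalClosure.re_inner_starProjection_self c
  simp only [← RCLike.re_to_complex, hGG, hGc, hPc, forall_and]
  exact and_congr (forall_mul_sq_norm_le_sq_norm_adjoint_comp_self_iff K hA.le)
    (forall_sq_norm_adjoint_comp_self_le_mul_sq_norm_iff K (hA.le.trans hAB))
end
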